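/- For every n ≥ 3, both position pairs {3·2^{n-3}, 3·2^{n-2}} and {2^{n-1}, 3·2^{n-2}} (positions 1-based) are smallest string attractors of the period-doubling word D_n. -/

import Mathlib

/-- The period-doubling morphism over {a, b} (with `false` = a, `true` = b):
φ(a) = ab, φ(b) = aa. -/
def phi : Bool → List Bool
  | false => [false, true]
  | true => [false, false]

/-- Period-doubling words: D 0 = a, D (n+1) = φ(D n); |D n| = 2^n. -/
def D : ℕ → List Bool
  | 0 => [false]
  | n + 1 => (D n).flatMap phi

/-- `w` occurs in `T` at (1-based) position `i`, i.e. `w = T[i .. i + |w| - 1]`. -/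
def OccursAt {α : Type*} (T w : List α) (i : ℕ) : Prop :=
  1 ≤ i ∧ i + w.length ≤ T.length + 1 ∧ (T.drop (i - 1)).take w.length = w

/-- `Γ` is a string attractor of `T`: a set of (1-based) positions of `T` such that
every nonempty substring of `T` has an occurrence crossing a position of `Γ`. -/
def IsAttractor {α : Type*} (T : List α) (Γ : Finset ℕ) : Prop :=
  (∀ k ∈ Γ, 1 ≤ k ∧ k ≤ T.length) ∧
  ∀ w : List α, w ≠ [] → w <:+: T →
    ∃ i, OccursAt T w i ∧ ∃ k ∈ Γ, i ≤ k ∧ k < i + w.length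

/-- `Γ` is a smallest string attractor of `T`. -/
def IsSmallestAttractor {α : Type*} (T : List α) (Γ : Finset ℕ) : Prop :=
  IsAttractor T Γ ∧ ∀ Γ' : Finset ℕ, IsAttractor T Γ' → Γ.card ≤ Γ'.card

/-- The set of all smallest string attractors of `T`. -/
def Att {α : Type*} (T : List α) : Set (Finset ℕ) := {Γ | IsSmallestAttractor T Γ}

/-- 0-based occurrence. -/
def Occ0 (T w : List Bool) (i : ℕ) : Prop :=
  i + w.length ≤ T.length ∧ (T.drop i).take w.length = w

/-- 0-based-occurrence attractor condition (Γ still 1-based). -/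
def Att0 (T : List Bool) (Γ : Finset ℕ) : Prop :=
  ∀ w i0, w ≠ [] → Occ0 T w i0 →
    ∃ i, Occ0 T w i ∧ ∃ k ∈ Γ, i < k ∧ k ≤ i + w.length

lemma len_phi (u : List Bool) : (u.flatMap phi).length = 2 * u.length := by
  induction u with
  | nil => simp
  | cons c t ih => cases c <;> simp [phi, ih] <;> omega

lemma drop_phi (i : ℕ) (u : List Bool) :
    (u.flatMap phi).drop (2 * i) = (u.drop i).flatMap phi := by
  induction i generalizing u with
  | zero => simp
  | succ n ih =>
    cases u with
    | nil => simp
    | cons c t =>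
      have h2 : 2 * (n + 1) = 2 * n + 1 + 1 := by ring
      cases c <;> simp only [phi, List.flatMap_cons, List.cons_append, List.nil_append,
        h2, List.drop_succ_cons] <;> exact ih t

lemma phi_head (r : List Bool) (h : r ≠ []) :
    (r.flatMap phi).take 1 = [false] := by
  cases r with
  | nil => exact absurd rfl h
  | cons c t => cases c <;> simp [phi]

/-- Core slice computation. -/
lemma slice_phi (u v : List Bool) (i δ e : ℕ) (hδ : δ ≤ 1) (he : e ≤ 1)
    (hv : 1 ≤ v.length) (hocc : Occ0 u v i) (hroom : i + v.length + e ≤ u.length) :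
    ((u.flatMap phi).drop (2 * i + δ)).take (2 * v.length - δ + e)
      = (v.flatMap phi).drop δ ++ List.replicate e false := by
  obtain ⟨hlen, hsl⟩ := hocc
  have hsplit : u.drop i = v ++ u.drop (i + v.length) := by
    conv_lhs => rw [← List.take_append_drop v.length (u.drop i)]
    rw [hsl, List.drop_drop]
  have h1 : (u.flatMap phi).drop (2 * i + δ) =
      (v.flatMap phi).drop δ ++ (u.drop (i + v.length)).flatMap phi := by
    rw [← List.drop_drop, drop_phi, hsplit, List.flatMap_append,
      List.drop_append_of_le_length (by rw [len_phi]; omega)]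
  rw [h1]
  have hl1 : ((v.flatMap phi).drop δ).length = 2 * v.length - δ := by
    rw [List.length_drop, len_phi]
  have h2 : 2 * v.length - δ + e = ((v.flatMap phi).drop δ).length + e := by rw [hl1]
  rw [h2, List.take_length_add_append]
  congr 1
  cases e with
  | zero => simp
  | succ e' =>
    have he0 : e' = 0 := by omega
    subst he0
    have hne : u.drop (i + v.length) ≠ [] := by
      intro hcon
      have := congrArg List.length hcon
      simp at this
      omega
    rw [phi_head _ hne]
    rfl

lemma occ0_transfer (u v : List Bool) (i δ e : ℕ) (hδ : δ ≤ 1) (he : e ≤ 1)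
    (hv : 1 ≤ v.length) (hocc : Occ0 u v i) (hroom : i + v.length + e ≤ u.length) :
    Occ0 (u.flatMap phi) ((v.flatMap phi).drop δ ++ List.replicate e false) (2 * i + δ) := by
  have hl : ((v.flatMap phi).drop δ ++ List.replicate e false).length
      = 2 * v.length - δ + e := by
    rw [List.length_append, List.length_drop, len_phi, List.length_replicate]
  constructor
  · rw [hl, len_phi]; omega
  · rw [hl]; exact slice_phi u v i δ e hδ he hv hocc hroom

/-- Extraction: every occurrence of a factor `w` (|w| ≥ 2) of `φ(u)` comes from
a factor `v` of `u`. -/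
lemma extract_phi (u w : List Bool) (j : ℕ) (hw : 2 ≤ w.length)
    (hocc : Occ0 (u.flatMap phi) w j) :
    ∃ i0 δ e v, δ ≤ 1 ∧ e ≤ 1 ∧ 1 ≤ v.length ∧ j = 2 * i0 + δ ∧
      w.length = 2 * v.length - δ + e ∧
      w = (v.flatMap phi).drop δ ++ List.replicate e false ∧
      Occ0 u v i0 ∧ i0 + v.length + e ≤ u.length := by
  obtain ⟨hlen, hsl⟩ := hocc
  rw [len_phi] at hlen
  set i0 := j / 2 with hi0
  set δ := j % 2 with hδdef
  set m := (w.length + δ) / 2 with hm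
  set e := (w.length + δ) % 2 with he
  have hδ1 : δ ≤ 1 := Nat.lt_succ_iff.mp (Nat.mod_lt _ (by norm_num))
  have he1 : e ≤ 1 := Nat.lt_succ_iff.mp (Nat.mod_lt _ (by norm_num))
  have hj : j = 2 * i0 + δ := by rw [hi0, hδdef]; omega
  have hwl : w.length + δ = 2 * m + e := by rw [hm, he]; omega
  have hm1 : 1 ≤ m := by omega
  have hroom : i0 + m + e ≤ u.length := by omega
  set v := (u.drop i0).take m with hv
  have hvl : v.length = m := by
    rw [hv, List.length_take, List.length_drop]; omega
  have hoccv : Occ0 u v i0 := by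
    refine ⟨by omega, ?_⟩
    rw [hvl]
  refine ⟨i0, δ, e, v, hδ1, he1, by omega, hj, by omega, ?_, hoccv, by omega⟩
  have := slice_phi u v i0 δ e hδ1 he1 (by omega) hoccv (by omega)
  rw [← this, ← hj, hvl]
  have : 2 * m - δ + e = w.length := by omega
  rw [this, hsl]

lemma occ0_dropLast_iff (T w : List Bool) (i : ℕ) :
    Occ0 T.dropLast w i ↔ Occ0 T w i ∧ i + w.length ≤ T.length - 1 := by
  have hslice : i + w.length ≤ T.length - 1 →
      ((T.dropLast).drop i).take w.length = (T.drop i).take w.length := by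
    intro h
    rw [List.dropLast_eq_take, List.drop_take, List.take_take,
      Nat.min_eq_left (by omega)]
  constructor
  · rintro ⟨h1, h2⟩
    rw [List.length_dropLast] at h1
    exact ⟨⟨by omega, by rw [← hslice h1]; exact h2⟩, h1⟩
  · rintro ⟨⟨h1, h2⟩, h3⟩
    exact ⟨by rw [List.length_dropLast]; omega, by rw [hslice h3]; exact h2⟩

lemma occ0_singleton (T : List Bool) (c : Bool) (i : ℕ) :
    Occ0 T [c] i ↔ T[i]? = some c := by
  constructor
  · rintro ⟨h1, h2⟩
    rw [← List.head?_drop]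
    cases h : T.drop i with
    | nil => rw [h] at h2; simp at h2
    | cons a t => rw [h] at h2; simp at h2; simp [h2]
  · intro h
    have hi : i < T.length := by
      by_contra hc
      rw [List.getElem?_eq_none (by omega)] at h
      exact nomatch h
    rw [← List.head?_drop] at h
    refine ⟨by simpa using hi, ?_⟩
    cases hd : T.drop i with
    | nil => rw [hd] at h; simp at h
    | cons a t => rw [hd] at h; simp at h; simp [h]

lemma get_phi_snd (u : List Bool) (b : ℕ) (c : Bool) (h : u[b]? = some c) :
    (u.flatMap phi)[2 * b + 1]? = some (!c) := by
  induction u generalizing b with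
  | nil => simp at h
  | cons c' t ih =>
    cases b with
    | zero =>
      simp at h
      subst h
      cases c' <;> simp [phi]
    | succ b' =>
      simp only [List.getElem?_cons_succ] at h
      have h2 : 2 * (b' + 1) + 1 = (2 * b' + 1) + 1 + 1 := by ring
      cases c' <;>
        simp only [phi, List.flatMap_cons, List.cons_append, List.nil_append, h2,
          List.getElem?_cons_succ] <;> exact ih b' h

/-- The inductive invariant. -/
def Good (u : List Bool) (Γ : Finset ℕ) : Prop :=
  (∀ k ∈ Γ, 1 ≤ k ∧ k + 1 ≤ u.length) ∧
  (∃ γ ∈ Γ, u[γ - 1]? = some false) ∧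
  (∃ γ ∈ Γ, u[γ - 1]? = some true) ∧
  Att0 u Γ ∧ Att0 u.dropLast Γ

lemma good_phi (u : List Bool) (Γ : Finset ℕ) (hG : Good u Γ) :
    Good (u.flatMap phi) (Γ.image (2 * ·)) := by
  obtain ⟨hB, ⟨γf, hγf, hf⟩, ⟨γt, hγt, ht⟩, hA, hAD⟩ := hG
  have hlen2 : (u.flatMap phi).length = 2 * u.length := len_phi u
  -- the |w| = 1 occurrences crossing a doubled position
  have hone : ∀ c : Bool, ∃ γ ∈ Γ, ∃ i, Occ0 (u.flatMap phi) [c] i ∧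
      i + 1 ≤ 2 * u.length - 1 ∧ i < 2 * γ ∧ 2 * γ ≤ i + 1 := by
    intro c
    cases c with
    | false =>
      refine ⟨γt, hγt, 2 * (γt - 1) + 1, ?_, ?_, ?_, ?_⟩
      · rw [occ0_singleton]
        simpa using get_phi_snd u (γt - 1) true ht
      all_goals (obtain ⟨h1, h2⟩ := hB γt hγt; omega)
    | true =>
      refine ⟨γf, hγf, 2 * (γf - 1) + 1, ?_, ?_, ?_, ?_⟩
      · rw [occ0_singleton]
        simpa using get_phi_snd u (γf - 1) false hf
      all_goals (obtain ⟨h1, h2⟩ := hB γf hγf; omega)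
  refine ⟨?_, ?_, ?_, ?_, ?_⟩
  · rintro k hk
    simp only [Finset.mem_image] at hk
    obtain ⟨γ, hγ, rfl⟩ := hk
    obtain ⟨h1, h2⟩ := hB γ hγ
    constructor <;> omega
  · refine ⟨2 * γt, Finset.mem_image_of_mem _ hγt, ?_⟩
    have h1 : 1 ≤ γt := (hB γt hγt).1
    have := get_phi_snd u (γt - 1) true ht
    have h2 : 2 * γt - 1 = 2 * (γt - 1) + 1 := by omega
    rw [h2]; simpa using this
  · refine ⟨2 * γf, Finset.mem_image_of_mem _ hγf, ?_⟩
    have h1 : 1 ≤ γf := (hB γf hγf).1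
    have := get_phi_snd u (γf - 1) false hf
    have h2 : 2 * γf - 1 = 2 * (γf - 1) + 1 := by omega
    rw [h2]; simpa using this
  -- Att0 (φ u)
  · intro w j0 hw hocc
    rcases Nat.lt_or_ge w.length 2 with h1 | h2
    · -- |w| = 1
      have hl1 : w.length = 1 := by
        have : w.length ≠ 0 := by simpa using hw
        omega
      obtain ⟨c, rfl⟩ := List.length_eq_one_iff.mp hl1
      obtain ⟨γ, hγ, i, hi, _, hlt, hle⟩ := hone c
      exact ⟨i, hi, 2 * γ, Finset.mem_image_of_mem _ hγ, hlt, by simpa using hle⟩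
    · obtain ⟨i0, δ, e, v, hδ, he, hv, hj, hwl, hweq, hoccv, hroom⟩ :=
        extract_phi u w j0 h2 hocc
      have hvne : v ≠ [] := by intro h; rw [h] at hv; simp at hv
      rcases Nat.lt_or_ge e 1 with he0 | he1
      · -- e = 0
        have he0 : e = 0 := by omega
        subst he0
        obtain ⟨i, hocci, k, hk, hik1, hik2⟩ := hA v i0 hvne hoccv
        have htr := occ0_transfer u v i δ 0 hδ (by omega) hv hocci
          (by have := hocci.1; omega)
        rw [← hweq] at htr
        refine ⟨2 * i + δ, htr, 2 * k, Finset.mem_image_of_mem _ hk, by omega, by omega⟩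
      · -- e = 1
        have he1 : e = 1 := by omega
        subst he1
        have hoccvD : Occ0 u.dropLast v i0 :=
          (occ0_dropLast_iff u v i0).mpr ⟨hoccv, by omega⟩
        obtain ⟨i, hocci, k, hk, hik1, hik2⟩ := hAD v i0 hvne hoccvD
        obtain ⟨hocci', hiend⟩ := (occ0_dropLast_iff u v i).mp hocci
        have htr := occ0_transfer u v i δ 1 hδ (by omega) hv hocci' (by omega)
        rw [← hweq] at htr
        refine ⟨2 * i + δ, htr, 2 * k, Finset.mem_image_of_mem _ hk, by omega, by omega⟩
  -- Att0 (φ u).dropLast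
  · intro w j0 hw hocc
    obtain ⟨hocc', hend⟩ := (occ0_dropLast_iff _ w j0).mp hocc
    rw [hlen2] at hend
    rcases Nat.lt_or_ge w.length 2 with h1 | h2
    · have hl1 : w.length = 1 := by
        have : w.length ≠ 0 := by simpa using hw
        omega
      obtain ⟨c, rfl⟩ := List.length_eq_one_iff.mp hl1
      obtain ⟨γ, hγ, i, hi, hend', hlt, hle⟩ := hone c
      refine ⟨i, (occ0_dropLast_iff _ _ _).mpr ⟨hi, by simp only [List.length_singleton, hlen2]; omega⟩,
        2 * γ, Finset.mem_image_of_mem _ hγ, hlt, by simpa using hle⟩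
    · obtain ⟨i0, δ, e, v, hδ, he, hv, hj, hwl, hweq, hoccv, hroom⟩ :=
        extract_phi u w j0 h2 hocc'
      have hvne : v ≠ [] := by intro h; rw [h] at hv; simp at hv
      have hi0end : i0 + v.length ≤ u.length - 1 := by omega
      have hoccvD : Occ0 u.dropLast v i0 :=
        (occ0_dropLast_iff u v i0).mpr ⟨hoccv, hi0end⟩
      obtain ⟨i, hocci, k, hk, hik1, hik2⟩ := hAD v i0 hvne hoccvD
      obtain ⟨hocci', hiend⟩ := (occ0_dropLast_iff u v i).mp hocci
      have hu1 : 1 ≤ u.length := by omega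
      have htr := occ0_transfer u v i δ e hδ he hv hocci' (by omega)
      rw [← hweq] at htr
      refine ⟨2 * i + δ, (occ0_dropLast_iff _ _ _).mpr ⟨htr, ?_⟩,
        2 * k, Finset.mem_image_of_mem _ hk, by omega, by omega⟩
      rw [hlen2]
      omega

def chk (T : List Bool) (ks : List ℕ) : Bool :=
  (List.range T.length).all fun i0 =>
    (List.range (T.length + 1)).all fun l =>
      !(decide (1 ≤ l) && decide (i0 + l ≤ T.length)) ||
      (List.range T.length).any fun i =>
        ((T.drop i).take l == (T.drop i0).take l) &&
        ks.any fun k => decide (i < k) && decide (k ≤ i + l)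

lemma att0_of_chk (T : List Bool) (ks : List ℕ) (Γ : Finset ℕ)
    (hks : ∀ k ∈ ks, k ∈ Γ) (h : chk T ks = true) : Att0 T Γ := by
  simp only [chk, List.all_eq_true, List.any_eq_true, List.mem_range, Bool.or_eq_true,
    Bool.not_eq_true', Bool.and_eq_true, decide_eq_true_eq, beq_iff_eq,
    Bool.and_eq_false_iff, decide_eq_false_iff_not] at h
  rintro w i0 hw ⟨hlen, hsl⟩
  have hw1 : 1 ≤ w.length := by
    have : w.length ≠ 0 := by simpa using hw
    omega
  rcases h i0 (by omega) w.length (by omega) with hbad | ⟨i, hi, heq, k, hk, h1, h2⟩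
  · rcases hbad with h' | h' <;> omega
  · have hsl' : (T.drop i).take w.length = w := by rw [heq, hsl]
    have hilen : i + w.length ≤ T.length := by
      have := congrArg List.length hsl'
      simp [List.length_take, List.length_drop] at this
      omega
    exact ⟨i, ⟨hilen, hsl'⟩, k, hks k hk, h1, h2⟩

lemma D3_eq : D 3 = [false, true, false, false, false, true, false, true] := by rfl

lemma good_D3_1 : Good (D 3) ({3, 6} : Finset ℕ) := by
  rw [D3_eq]
  refine ⟨by decide, ⟨3, by decide, by decide⟩, ⟨6, by decide, by decide⟩, ?_, ?_⟩
  · exact att0_of_chk _ [3, 6] _ (by decide) (by decide)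
  · exact att0_of_chk _ [3, 6] _ (by decide) (by decide)

lemma good_D3_2 : Good (D 3) ({4, 6} : Finset ℕ) := by
  rw [D3_eq]
  refine ⟨by decide, ⟨4, by decide, by decide⟩, ⟨6, by decide, by decide⟩, ?_, ?_⟩
  · exact att0_of_chk _ [4, 6] _ (by decide) (by decide)
  · exact att0_of_chk _ [4, 6] _ (by decide) (by decide)

lemma good_D_fam1 : ∀ m : ℕ, Good (D (m + 3)) ({3 * 2 ^ m, 3 * 2 ^ (m + 1)} : Finset ℕ) := by
  intro m
  induction m with
  | zero => simpa using good_D3_1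
  | succ m ih =>
    have hD : D (m + 1 + 3) = (D (m + 3)).flatMap phi := rfl
    have himg : (({3 * 2 ^ m, 3 * 2 ^ (m + 1)} : Finset ℕ).image (2 * ·))
        = ({3 * 2 ^ (m + 1), 3 * 2 ^ (m + 1 + 1)} : Finset ℕ) := by
      rw [Finset.image_insert, Finset.image_singleton]
      congr 1 <;> simp [pow_succ] <;> ring
    rw [hD, ← himg]
    exact good_phi _ _ ih

lemma good_D_fam2 : ∀ m : ℕ, Good (D (m + 3)) ({2 ^ (m + 2), 3 * 2 ^ (m + 1)} : Finset ℕ) := by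
  intro m
  induction m with
  | zero => simpa using good_D3_2
  | succ m ih =>
    have hD : D (m + 1 + 3) = (D (m + 3)).flatMap phi := rfl
    have himg : (({2 ^ (m + 2), 3 * 2 ^ (m + 1)} : Finset ℕ).image (2 * ·))
        = ({2 ^ (m + 1 + 2), 3 * 2 ^ (m + 1 + 1)} : Finset ℕ) := by
      rw [Finset.image_insert, Finset.image_singleton]
      congr 1 <;> simp [pow_succ] <;> ring
    rw [hD, ← himg]
    exact good_phi _ _ ih

lemma isattractor_of_good (T : List Bool) (Γ : Finset ℕ) (h : Good T Γ) :
    IsAttractor T Γ := by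
  obtain ⟨hB, -, -, hA, -⟩ := h
  constructor
  · intro k hk
    obtain ⟨h1, h2⟩ := hB k hk
    exact ⟨h1, by omega⟩
  · intro w hw hinf
    obtain ⟨s, t, hst⟩ := hinf
    have hocc : Occ0 T w s.length := by
      constructor
      · have := congrArg List.length hst
        simp [List.length_append] at this
        omega
      · rw [← hst, List.append_assoc, List.drop_left, List.take_left]
    obtain ⟨i, ⟨hlen, hsl⟩, k, hk, h1, h2⟩ := hA w s.length hw hocc
    exact ⟨i + 1, ⟨by omega, by omega, by simpa using hsl⟩, k, hk, by omega, by omega⟩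

lemma D_shape : ∀ n : ℕ, ∃ r, D (n + 1) = false :: true :: r := by
  intro n
  induction n with
  | zero => exact ⟨[], rfl⟩
  | succ n ih =>
    obtain ⟨r, hr⟩ := ih
    refine ⟨false :: false :: r.flatMap phi, ?_⟩
    show (D (n + 1)).flatMap phi = _
    rw [hr]
    rfl

lemma two_le_card_attractor (T : List Bool) (hsh : ∃ r, T = false :: true :: r)
    (Γ' : Finset ℕ) (hA : IsAttractor T Γ') : 2 ≤ Γ'.card := by
  obtain ⟨r, rfl⟩ := hsh
  obtain ⟨i, ⟨hi1, hi2, hi3⟩, k, hk, hk1, hk2⟩ :=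
    hA.2 [false] (by simp) ⟨[], true :: r, rfl⟩
  obtain ⟨i', ⟨hi1', hi2', hi3'⟩, k', hk', hk1', hk2'⟩ :=
    hA.2 [true] (by simp) ⟨[false], r, rfl⟩
  simp only [List.length_singleton] at hk2 hk2'
  have hki : k = i := by omega
  have hki' : k' = i' := by omega
  have hne : k ≠ k' := by
    intro hcon
    rw [hki, hki'] at hcon
    simp only [List.length_singleton] at hi3 hi3'
    rw [hcon, hi3'] at hi3
    simp at hi3
  have hsub : ({k, k'} : Finset ℕ) ⊆ Γ' := by
    intro x hx
    rcases Finset.mem_insert.mp hx with rfl | hx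
    · exact hk
    · rw [Finset.mem_singleton.mp hx]; exact hk'
  calc 2 = ({k, k'} : Finset ℕ).card := (Finset.card_pair hne).symm
    _ ≤ Γ'.card := Finset.card_le_card hsub

/-- For every n ≥ 3, both {3·2^{n-3}, 3·2^{n-2}} and
{2^{n-1}, 3·2^{n-2}} are smallest string attractors of D_n (positions 1-based). -/
theorem pd_valid_attractors :
    ∀ n : ℕ, 3 ≤ n →
      IsSmallestAttractor (D n) ({3 * 2 ^ (n - 3), 3 * 2 ^ (n - 2)} : Finset ℕ) ∧
      IsSmallestAttractor (D n) ({2 ^ (n - 1), 3 * 2 ^ (n - 2)} : Finset ℕ) := by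
  intro n hn
  obtain ⟨m, rfl⟩ : ∃ m, n = m + 3 := ⟨n - 3, by omega⟩
  have e1 : m + 3 - 3 = m := by omega
  have e2 : m + 3 - 2 = m + 1 := by omega
  have e3 : m + 3 - 1 = m + 2 := by omega
  rw [e1, e2, e3]
  have hsh : ∃ r, D (m + 3) = false :: true :: r := D_shape (m + 2)
  have hp1 : 0 < (2 : ℕ) ^ m := by positivity
  have hp2 : (2 : ℕ) ^ (m + 1) = 2 * 2 ^ m := by ring
  have hp3 : (2 : ℕ) ^ (m + 2) = 4 * 2 ^ m := by ring
  have hcard1 : ({3 * 2 ^ m, 3 * 2 ^ (m + 1)} : Finset ℕ).card = 2 := by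
    rw [Finset.card_insert_of_notMem (by simp), Finset.card_singleton]
  have hcard2 : ({2 ^ (m + 2), 3 * 2 ^ (m + 1)} : Finset ℕ).card = 2 := by
    rw [Finset.card_insert_of_notMem (by simp; omega), Finset.card_singleton]
  refine ⟨⟨isattractor_of_good _ _ (good_D_fam1 m), fun Γ' hΓ' => ?_⟩,
    ⟨isattractor_of_good _ _ (good_D_fam2 m), fun Γ' hΓ' => ?_⟩⟩
  · rw [hcard1]; exact two_le_card_attractor _ hsh Γ' hΓ'
  · rw [hcard2]; exact two_le_card_attractor _ hsh Γ' hΓ'
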